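/- arXiv:1808.08184 — 8 statements merged into one kernel-verified Lean document; each statement's English description precedes it below -/
import Mathlib

section
/- Let R > 0 and c₁, c₂ ∈ E with d = dist c₁ c₂ satisfying d < 2R, and set D = Metric.closedBall c₁ R ∩ Metric.closedBall c₂ R (a lune). Then the inradius of D equals R − d/2, that is, sSup {Metric.infDist x (frontier D) | x ∈ D} = R − d/2. -/
open Metric Set

/-- If a closed ball of radius `r ≥ 0` around `x` is contained in the closed ball of radius
`R` around `c`, then `dist x c + r ≤ R`. -/
lemma dist_add_le_of_closedBall_subset {E : Type*} [NormedAddCommGroup E] [NormedSpace ℝ E]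
    [Nontrivial E] {x c : E} {r R : ℝ} (hr : 0 ≤ r)
    (h : closedBall x r ⊆ closedBall c R) : dist x c + r ≤ R := by
  obtain ⟨z, hzx, hzc⟩ : ∃ z, dist z x = r ∧ dist z c = dist x c + r := by
    rcases eq_or_ne x c with rfl | hxc
    · obtain ⟨u, hu⟩ := exists_norm_eq E hr
      exact ⟨x + u, by simp [dist_eq_norm, hu], by simp [dist_eq_norm, hu]⟩
    · have hn : ‖x - c‖ ≠ 0 := by simpa [sub_eq_zero] using hxc
      refine ⟨x + (r / ‖x - c‖) • (x - c), ?_, ?_⟩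
      · rw [dist_eq_norm, add_sub_cancel_left, norm_smul, Real.norm_of_nonneg
          (div_nonneg hr (norm_nonneg _)), div_mul_cancel₀ _ hn]
      · have hz : x + (r / ‖x - c‖) • (x - c) - c = (1 + r / ‖x - c‖) • (x - c) := by
          rw [add_smul, one_smul]; abel
        have h1 : (0 : ℝ) ≤ 1 + r / ‖x - c‖ := by positivity
        rw [dist_eq_norm, hz, norm_smul, Real.norm_of_nonneg h1, dist_eq_norm]
        field_simp
  have := h (mem_closedBall.2 hzx.le)
  rw [mem_closedBall, hzc] at this
  linarith [this]

/-- For `x` in a compact set `K`, the distance to the frontier equals the distance to the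
complement. -/
lemma infDist_frontier_eq_infDist_compl {E : Type*} [NormedAddCommGroup E] [NormedSpace ℝ E]
    [Nontrivial E] {K : Set E} (hK : IsCompact K) {x : E} (hx : x ∈ K) :
    Metric.infDist x (frontier K) = Metric.infDist x Kᶜ := by
  obtain ⟨y, hy, hyd⟩ := hK.exists_mem_frontier_infDist_compl_eq_dist hx
  refine le_antisymm ?_ ?_
  · rw [hyd]; exact Metric.infDist_le_dist_of_mem hy
  · have hsub : frontier K ⊆ closure Kᶜ := by
      rw [frontier_eq_closure_inter_closure]; exact inter_subset_right
    calc Metric.infDist x Kᶜ = Metric.infDist x (closure Kᶜ) :=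
          (Metric.infDist_closure).symm
      _ ≤ Metric.infDist x (frontier K) :=
          Metric.infDist_le_infDist_of_subset hsub ⟨y, hy⟩

/-- **Inradius of a Euclidean lune.**
The inradius of the intersection of two closed disks of radius `R` in the Euclidean plane
whose centers are at distance `d < 2R` equals `R − d/2`. -/
theorem inradius_of_euclidean_lune
    (R : ℝ) (hR : 0 < R)
    (c₁ c₂ : EuclideanSpace ℝ (Fin 2)) (d : ℝ) (hd : d = dist c₁ c₂) (hd2 : d < 2 * R)
    (D : Set (EuclideanSpace ℝ (Fin 2)))
    (hD : D = Metric.closedBall c₁ R ∩ Metric.closedBall c₂ R) :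
    sSup {y : ℝ | ∃ x ∈ D, Metric.infDist x (frontier D) = y} = R - d / 2 := by
  subst hd hD
  set d := dist c₁ c₂ with hd
  have hd0 : 0 ≤ d := dist_nonneg
  set D := Metric.closedBall c₁ R ∩ Metric.closedBall c₂ R with hD
  have hDcompact : IsCompact D :=
    (isCompact_closedBall c₁ R).inter_right Metric.isClosed_closedBall
  have hDclosed : IsClosed D := hDcompact.isClosed
  -- the midpoint belongs to D
  set m := midpoint ℝ c₁ c₂ with hm
  have hm1 : dist m c₁ = d / 2 := by
    rw [hm, dist_midpoint_left]; norm_num; ring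
  have hm2 : dist m c₂ = d / 2 := by
    rw [hm, dist_midpoint_right]; norm_num; ring
  have hmD : m ∈ D :=
    ⟨mem_closedBall.2 (by rw [hm1]; linarith), mem_closedBall.2 (by rw [hm2]; linarith)⟩
  -- upper bound: for every x ∈ D, infDist x (frontier D) ≤ R - d/2
  have hub : ∀ x ∈ D, Metric.infDist x (frontier D) ≤ R - d / 2 := by
    intro x hx
    rw [infDist_frontier_eq_infDist_compl hDcompact hx]
    set r := Metric.infDist x Dᶜ with hr
    have hr0 : 0 ≤ r := Metric.infDist_nonneg
    have hball : closedBall x r ⊆ D := by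
      have := Metric.closedBall_infDist_compl_subset_closure (s := D) hx
      rwa [hDclosed.closure_eq] at this
    have h1 : dist x c₁ + r ≤ R :=
      dist_add_le_of_closedBall_subset hr0 (hball.trans inter_subset_left)
    have h2 : dist x c₂ + r ≤ R :=
      dist_add_le_of_closedBall_subset hr0 (hball.trans inter_subset_right)
    have htri : d ≤ dist x c₁ + dist x c₂ := by
      rw [hd]
      calc dist c₁ c₂ ≤ dist c₁ x + dist x c₂ := dist_triangle _ _ _
        _ = dist x c₁ + dist x c₂ := by rw [dist_comm c₁ x]
    linarith
  -- the frontier is nonempty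
  obtain ⟨y₀, hy₀, _⟩ := hDcompact.exists_mem_frontier_infDist_compl_eq_dist hmD
  -- the value at the midpoint is exactly R - d/2
  have hmid : Metric.infDist m (frontier D) = R - d / 2 := by
    refine le_antisymm (hub m hmD) ?_
    rw [← not_lt]
    intro hlt
    rw [Metric.infDist_lt_iff ⟨y₀, hy₀⟩] at hlt
    obtain ⟨y, hy, hlt⟩ := hlt
    have hy' : y ∈ frontier (Metric.closedBall c₁ R) ∪ frontier (Metric.closedBall c₂ R) := by
      rcases frontier_inter_subset (Metric.closedBall c₁ R) (Metric.closedBall c₂ R) hy with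
        h | h
      exacts [Or.inl h.1, Or.inr h.2]
    rw [dist_comm m y] at hlt
    rcases hy' with h | h
    · rw [frontier_closedBall _ hR.ne', mem_sphere] at h
      have ht : dist y c₁ ≤ dist y m + dist m c₁ := dist_triangle _ _ _
      linarith
    · rw [frontier_closedBall _ hR.ne', mem_sphere] at h
      have ht : dist y c₂ ≤ dist y m + dist m c₂ := dist_triangle _ _ _
      linarith
  -- conclude
  have hmem : R - d / 2 ∈ {y : ℝ | ∃ x ∈ D, Metric.infDist x (frontier D) = y} :=
    ⟨m, hmD, hmid⟩
  refine le_antisymm (csSup_le ⟨_, hmem⟩ ?_) (le_csSup ⟨R - d / 2, ?_⟩ hmem)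
  · rintro y ⟨x, hx, rfl⟩; exact hub x hx
  · rintro y ⟨x, hx, rfl⟩; exact hub x hx
end

section
/- Let R > 0 and c₁, c₂ ∈ E with d = dist c₁ c₂ satisfying d < 2R, and set D = Metric.closedBall c₁ R ∩ Metric.closedBall c₂ R (a lune). Then the perimeter of D equals 4·R·arccos(d/(2R)), that is, μH[1] (frontier D) = ENNReal.ofReal (4·R·Real.arccos (d/(2R))). -/
/-!
The frontier of the lune is the union of two circular arcs, one on each circle, which meet in
at most two points. With `α = arccos (d / (2R))`, each arc is `θ ↦ cᵢ + R e^{iθ}` for `θ` in an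
interval of length `2α` around the direction of the other centre, so the perimeter is `4Rα`.
The Hausdorff measure of an arc of angle `β` is `Rβ`: the parametrisation is `R`-Lipschitz,
which gives `≤`; and a connected set has measure at least the distance between any two of its
points, so the measure of the arc dominates the perimeter `2nR sin (β / 2n)` of every inscribed
regular polygon, which tends to `Rβ`.
-/

open MeasureTheory Set Metric Filter Topology Real Complex

theorem IsClosed.frontier_inter {X : Type*} [TopologicalSpace X] {s t : Set X}
    (hs : IsClosed s) (ht : IsClosed t) :
    frontier (s ∩ t) = frontier s ∩ t ∪ s ∩ frontier t := by
  rw [(hs.inter ht).frontier_eq, hs.frontier_eq, ht.frontier_eq, interior_inter]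
  ext x
  simp only [Set.mem_sdiff, mem_inter_iff, mem_union]
  tauto

theorem finite_sphere_inter_sphere {V P : Type*} [NormedAddCommGroup V] [InnerProductSpace ℝ V]
    [MetricSpace P] [NormedAddTorsor V P] (hV : Module.finrank ℝ V = 2) {c₁ c₂ : P}
    (hc : c₁ ≠ c₂) (r₁ r₂ : ℝ) : (sphere c₁ r₁ ∩ sphere c₂ r₂).Finite := by
  have : FiniteDimensional ℝ V := .of_finrank_pos (by omega)
  rcases (sphere c₁ r₁ ∩ sphere c₂ r₂).eq_empty_or_nonempty with h | ⟨p₁, hp₁⟩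
  · simp [h]
  by_cases hsub : sphere c₁ r₁ ∩ sphere c₂ r₂ ⊆ {p₁}
  · exact (finite_singleton p₁).subset hsub
  obtain ⟨p₂, hp₂, hne⟩ := not_subset.1 hsub
  refine (toFinite {p₁, p₂}).subset fun p hp => ?_
  exact EuclideanGeometry.eq_of_dist_eq_of_dist_eq_of_finrank_eq_two hV hc (Ne.symm hne)
    hp₁.1 hp₂.1 hp.1 hp₁.2 hp₂.2 hp.2

theorem ofReal_dist_le_hausdorffMeasure_of_isPreconnected {X : Type*} [MetricSpace X]
    [MeasurableSpace X] [BorelSpace X] {s : Set X} (hs : IsPreconnected s) {x y : X}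
    (hx : x ∈ s) (hy : y ∈ s) : ENNReal.ofReal (dist x y) ≤ μH[1] s := by
  have hIcc : Icc (dist x x) (dist x y) ⊆ dist x '' s :=
    (hs.image _ (LipschitzWith.dist_right x).continuous.continuousOn).Icc_subset
      (mem_image_of_mem _ hx) (mem_image_of_mem _ hy)
  calc ENNReal.ofReal (dist x y) = volume (Icc (dist x x) (dist x y)) := by
        rw [Real.volume_Icc, dist_self, sub_zero]
    _ ≤ μH[1] (dist x '' s) := by
        rw [hausdorffMeasure_real]; exact measure_mono hIcc
    _ ≤ μH[1] s := by
        simpa using (LipschitzWith.dist_right x).hausdorffMeasure_image_le zero_le_one s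

theorem pairwiseDisjoint_image_Icc_sdiff_right {X : Type*} {f : ℝ → X} {t : ℕ → ℝ}
    (ht : Monotone t) (n : ℕ) (hinj : InjOn f (Ico (t 0) (t n))) :
    (Finset.range n : Set ℕ).PairwiseDisjoint
      fun i => f '' Icc (t i) (t (i + 1)) \ {f (t (i + 1))} := by
  have hlt : ∀ i j, i < j → j < n → Disjoint (f '' Icc (t i) (t (i + 1)) \ {f (t (i + 1))})
      (f '' Icc (t j) (t (j + 1)) \ {f (t (j + 1))}) := by
    refine fun i j hij hjn => disjoint_left.2 ?_
    rintro _ ⟨⟨s, ⟨hs_ge, hs_le⟩, rfl⟩, hsi⟩ ⟨⟨s', ⟨hs'_ge, hs'_le⟩, hss'⟩, hsj⟩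
    have hs_lt : s < t (i + 1) := hs_le.lt_of_ne (by rintro rfl; exact hsi rfl)
    have hs'_lt : s' < t (j + 1) := hs'_le.lt_of_ne (by rintro rfl; exact hsj hss'.symm)
    have h0i : t 0 ≤ t i := ht (Nat.zero_le i)
    have hij' : t (i + 1) ≤ t j := ht hij
    have hjn' : t (j + 1) ≤ t n := ht hjn
    have : s' = s := hinj ⟨by linarith, by linarith⟩ ⟨by linarith, by linarith⟩ hss'
    linarith
  intro i hi j hj hij
  simp only [Finset.coe_range, mem_Iio] at hi hj
  rcases hij.lt_or_gt with h | h
  · exact hlt i j h hj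
  · exact (hlt j i h hi).symm

theorem sum_ofReal_dist_le_hausdorffMeasure_image {X : Type*} [MetricSpace X]
    [MeasurableSpace X] [BorelSpace X] {f : ℝ → X} {t : ℕ → ℝ} (ht : Monotone t) (n : ℕ)
    (hf : ContinuousOn f (Icc (t 0) (t n))) (hinj : InjOn f (Ico (t 0) (t n))) :
    ∑ i ∈ Finset.range n, ENNReal.ofReal (dist (f (t i)) (f (t (i + 1))))
      ≤ μH[1] (f '' Icc (t 0) (t n)) := by
  have := Measure.nullSingletonClass_hausdorff X one_pos
  -- removing the right endpoint makes the pieces disjoint without changing their measure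
  let piece i := f '' Icc (t i) (t (i + 1)) \ {f (t (i + 1))}
  have hsub : ∀ i < n, Icc (t i) (t (i + 1)) ⊆ Icc (t 0) (t n) := fun i hi =>
    Icc_subset_Icc (ht (Nat.zero_le i)) (ht hi)
  have hmeas : ∀ i < n, MeasurableSet (piece i) := fun i hi =>
    ((isCompact_Icc.image_of_continuousOn (hf.mono (hsub i hi))).isClosed.measurableSet).diff
      (measurableSet_singleton _)
  have hchord : ∀ i < n, ENNReal.ofReal (dist (f (t i)) (f (t (i + 1)))) ≤ μH[1] (piece i) := by
    intro i hi
    have hIcc : t i ≤ t (i + 1) := ht (Nat.le_succ i)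
    rw [measure_sdiff_null (measure_singleton _)]
    exact ofReal_dist_le_hausdorffMeasure_of_isPreconnected
      (isPreconnected_Icc.image _ (hf.mono (hsub i hi)))
      (mem_image_of_mem _ (left_mem_Icc.2 hIcc)) (mem_image_of_mem _ (right_mem_Icc.2 hIcc))
  calc ∑ i ∈ Finset.range n, ENNReal.ofReal (dist (f (t i)) (f (t (i + 1))))
      ≤ ∑ i ∈ Finset.range n, μH[1] (piece i) :=
        Finset.sum_le_sum fun i hi => hchord i (Finset.mem_range.1 hi)
    _ = μH[1] (⋃ i ∈ Finset.range n, piece i) :=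
        (measure_biUnion_finset (pairwiseDisjoint_image_Icc_sdiff_right ht n hinj)
          fun i hi => hmeas i (Finset.mem_range.1 hi)).symm
    _ ≤ μH[1] (f '' Icc (t 0) (t n)) :=
        measure_mono <| iUnion₂_subset fun i hi =>
          sdiff_subset.trans (image_mono (hsub i (Finset.mem_range.1 hi)))

theorem dist_circleMap_circleMap (c : ℂ) (R θ ψ : ℝ) :
    dist (circleMap c R θ) (circleMap c R ψ) = |R| * |2 * Real.sin ((θ - ψ) / 2)| := by
  have h : circleMap c R θ - circleMap c R ψ
      = R * exp (ψ * I) * (exp (I * ↑(θ - ψ)) - 1) := by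
    rw [mul_sub, mul_one, mul_assoc, ← Complex.exp_add]
    simp only [circleMap, ofReal_sub]
    ring_nf
  rw [dist_eq_norm, h, norm_mul, norm_mul, norm_exp_I_mul_ofReal_sub_one, norm_real,
    norm_exp_ofReal_mul_I, mul_one, Real.norm_eq_abs, Real.norm_eq_abs]

theorem Real.mul_sinc (x : ℝ) : x * sinc x = Real.sin x := by
  rcases eq_or_ne x 0 with rfl | hx
  · simp
  · rw [sinc_of_ne_zero hx, mul_div_cancel₀ _ hx]

theorem ofReal_mul_sinc_le_hausdorffMeasure_circleMap_image (c : ℂ) {R a b : ℝ} (hR : 0 < R)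
    (hab : a ≤ b) (h2π : b - a ≤ 2 * π) {n : ℕ} (hn : n ≠ 0) :
    ENNReal.ofReal (R * (b - a) * sinc ((b - a) / (2 * n)))
      ≤ μH[1] (circleMap c R '' Icc a b) := by
  set x := (b - a) / (2 * n)
  have hn' : (0 : ℝ) < n := by positivity
  have hx : 0 ≤ x := by positivity
  have hxπ : x ≤ π := by
    rw [div_le_iff₀ (by positivity)]
    nlinarith [(Nat.one_le_cast (α := ℝ)).2 (Nat.one_le_iff_ne_zero.2 hn), Real.pi_pos]
  let t : ℕ → ℝ := fun i => a + i * (2 * x)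
  have ht : Monotone t := fun i j hij => by
    have : (i : ℝ) ≤ j := by exact_mod_cast hij
    dsimp only [t]; nlinarith
  have htn : t n = b := by simp only [t, x]; field_simp; ring
  have hchord : ∀ i,
      dist (circleMap c R (t i)) (circleMap c R (t (i + 1))) = 2 * R * Real.sin x := by
    intro i
    have : (t i - t (i + 1)) / 2 = -x := by simp only [t]; push_cast; ring
    rw [dist_circleMap_circleMap, this, Real.sin_neg, mul_neg, abs_neg, abs_of_pos hR,
      abs_of_nonneg (by have := Real.sin_nonneg_of_nonneg_of_le_pi hx hxπ; positivity)]
    ring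
  have hsum : R * (b - a) * sinc x = n * (2 * R * Real.sin x) := by
    have hba : b - a = 2 * n * x := by simp only [x]; field_simp
    rw [hba, ← Real.mul_sinc x]; ring
  have ht0 : t 0 = a := by simp [t]
  have hpolygon := sum_ofReal_dist_le_hausdorffMeasure_image ht n
    (continuous_circleMap c R).continuousOn
    (by rw [ht0, htn]; exact injOn_circleMap_of_abs_sub_le' hR.ne' h2π)
  rw [ht0, htn] at hpolygon
  simp only [hchord, Finset.sum_const, Finset.card_range, nsmul_eq_mul] at hpolygon
  rwa [hsum, ENNReal.ofReal_mul (by positivity), ENNReal.ofReal_natCast]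

theorem hausdorffMeasure_circleMap_image_Icc (c : ℂ) {R a b : ℝ} (hR : 0 < R) (hab : a ≤ b)
    (h2π : b - a ≤ 2 * π) :
    μH[1] (circleMap c R '' Icc a b) = ENNReal.ofReal (R * (b - a)) := by
  refine le_antisymm ?_ ?_
  · have := (lipschitzWith_circleMap c R).hausdorffMeasure_image_le zero_le_one (Icc a b)
    rwa [hausdorffMeasure_real, Real.volume_Icc, ENNReal.rpow_one, ← ENNReal.ofReal_coe_nnreal,
      Real.coe_nnabs, abs_of_pos hR, ← ENNReal.ofReal_mul hR.le] at this
  · have hlim : Tendsto (fun n : ℕ => ENNReal.ofReal (R * (b - a) * sinc ((b - a) / (2 * n))))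
        atTop (𝓝 (ENNReal.ofReal (R * (b - a)))) := by
      have h0 : Tendsto (fun n : ℕ => (b - a) / (2 * n)) atTop (𝓝 0) := by
        simpa only [div_div] using tendsto_const_div_atTop_nhds_zero_nat ((b - a) / 2)
      have := ((continuous_sinc.tendsto 0).comp h0).const_mul (R * (b - a))
      rw [sinc_zero, mul_one] at this
      exact (ENNReal.continuous_ofReal.tendsto _).comp this
    exact le_of_tendsto hlim (eventually_ne_atTop 0 |>.mono fun n hn =>
      ofReal_mul_sinc_le_hausdorffMeasure_circleMap_image c hR hab h2π hn)

theorem dist_circleMap_add_arg_sq (c₁ c₂ : ℂ) (R ψ : ℝ) :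
    dist (circleMap c₁ R (arg (c₂ - c₁) + ψ)) c₂ ^ 2
      = R ^ 2 - 2 * R * dist c₁ c₂ * Real.cos ψ + dist c₁ c₂ ^ 2 := by
  have hc₂ : c₂ = c₁ + dist c₁ c₂ * exp (arg (c₂ - c₁) * I) := by
    rw [dist_comm, dist_eq_norm, norm_mul_exp_arg_mul_I, add_sub_cancel]
  set d := dist c₁ c₂
  set φ := arg (c₂ - c₁)
  have h : circleMap c₁ R (φ + ψ) - c₂ = exp (φ * I) * (R * exp (ψ * I) - d) := by
    conv_lhs => rw [hc₂]
    simp only [circleMap, ofReal_add, add_mul, Complex.exp_add]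
    ring
  rw [dist_eq_norm, h, norm_mul, norm_exp_ofReal_mul_I, one_mul, ← normSq_eq_norm_sq,
    normSq_apply]
  simp only [sub_re, sub_im, mul_re, mul_im, ofReal_re, ofReal_im, exp_ofReal_mul_I_re,
    exp_ofReal_mul_I_im]
  linear_combination R ^ 2 * Real.sin_sq_add_cos_sq ψ

theorem Real.le_cos_iff_abs_le_arccos {x ψ : ℝ} (hx₁ : -1 ≤ x) (hx₂ : x ≤ 1) (hψ : |ψ| ≤ π) :
    x ≤ Real.cos ψ ↔ |ψ| ≤ arccos x := by
  rw [← Real.cos_abs ψ]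
  constructor
  · intro h
    calc |ψ| = arccos (Real.cos |ψ|) := (arccos_cos (abs_nonneg ψ) hψ).symm
      _ ≤ arccos x := arccos_le_arccos h
  · intro h
    calc x = Real.cos (arccos x) := (cos_arccos hx₁ hx₂).symm
      _ ≤ Real.cos |ψ| := cos_le_cos_of_nonneg_of_le_pi (abs_nonneg ψ) (arccos_le_pi x) h

theorem circleMap_add_arg_mem_closedBall_iff {c₁ c₂ : ℂ} {R ψ : ℝ} (hR : 0 < R)
    (hne : c₁ ≠ c₂) (hd : dist c₁ c₂ ≤ 2 * R) (hψ : |ψ| ≤ π) :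
    circleMap c₁ R (arg (c₂ - c₁) + ψ) ∈ closedBall c₂ R ↔
      |ψ| ≤ arccos (dist c₁ c₂ / (2 * R)) := by
  have hd₀ : 0 < dist c₁ c₂ := dist_pos.2 hne
  rw [mem_closedBall, ← sq_le_sq₀ dist_nonneg hR.le, dist_circleMap_add_arg_sq,
    ← Real.le_cos_iff_abs_le_arccos (by linarith [div_nonneg hd₀.le (by linarith : 0 ≤ 2 * R)])
      ((div_le_one (by linarith)).2 hd) hψ, div_le_iff₀ (by linarith)]
  constructor <;> intro h <;> nlinarith

theorem sphere_inter_closedBall_eq_circleMap_image {c₁ c₂ : ℂ} {R : ℝ} (hR : 0 < R)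
    (hne : c₁ ≠ c₂) (hd : dist c₁ c₂ ≤ 2 * R) :
    sphere c₁ R ∩ closedBall c₂ R = circleMap c₁ R ''
      Icc (arg (c₂ - c₁) - arccos (dist c₁ c₂ / (2 * R)))
        (arg (c₂ - c₁) + arccos (dist c₁ c₂ / (2 * R))) := by
  set φ := arg (c₂ - c₁)
  set α := arccos (dist c₁ c₂ / (2 * R))
  have hsphere : sphere c₁ R = circleMap c₁ R '' Ioc (φ - π) (φ - π + 2 * π) := by
    rw [(periodic_circleMap c₁ R).image_Ioc two_pi_pos, range_circleMap, abs_of_pos hR]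
  ext p
  constructor
  · rintro ⟨hp, hp₂⟩
    rw [hsphere] at hp
    obtain ⟨θ, hθ, rfl⟩ := hp
    have hψ : |θ - φ| ≤ π := abs_le.2 ⟨by linarith [hθ.1], by linarith [hθ.2]⟩
    rw [← add_sub_cancel φ θ, circleMap_add_arg_mem_closedBall_iff hR hne hd hψ] at hp₂
    exact ⟨θ, ⟨by linarith [(abs_le.1 hp₂).1], by linarith [(abs_le.1 hp₂).2]⟩, rfl⟩
  · rintro ⟨θ, hθ, rfl⟩
    have hα : |θ - φ| ≤ α := abs_le.2 ⟨by linarith [hθ.1], by linarith [hθ.2]⟩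
    refine ⟨circleMap_mem_sphere c₁ hR.le θ, ?_⟩
    rwa [← add_sub_cancel φ θ,
      circleMap_add_arg_mem_closedBall_iff hR hne hd (hα.trans (arccos_le_pi _))]

theorem hausdorffMeasure_sphere (c : ℂ) {R : ℝ} (hR : 0 < R) :
    μH[1] (sphere c R) = ENNReal.ofReal (2 * π * R) := by
  rw [← abs_of_pos hR, ← range_circleMap, ← (periodic_circleMap c R).image_Icc two_pi_pos 0,
    hausdorffMeasure_circleMap_image_Icc c hR (by positivity) (by simp), abs_of_pos hR]
  congr 1; ring

theorem hausdorffMeasure_sphere_inter_closedBall {c₁ c₂ : ℂ} {R : ℝ} (hR : 0 < R)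
    (hne : c₁ ≠ c₂) (hd : dist c₁ c₂ ≤ 2 * R) :
    μH[1] (sphere c₁ R ∩ closedBall c₂ R)
      = ENNReal.ofReal (2 * R * arccos (dist c₁ c₂ / (2 * R))) := by
  have hα := arccos_nonneg (dist c₁ c₂ / (2 * R))
  rw [sphere_inter_closedBall_eq_circleMap_image hR hne hd,
    hausdorffMeasure_circleMap_image_Icc c₁ hR (by linarith)
      (by linarith [arccos_le_pi (dist c₁ c₂ / (2 * R))])]
  congr 1; ring

theorem hausdorffMeasure_frontier_closedBall_inter_closedBall {c₁ c₂ : ℂ} {R : ℝ} (hR : 0 < R)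
    (hd : dist c₁ c₂ ≤ 2 * R) :
    μH[1] (frontier (closedBall c₁ R ∩ closedBall c₂ R))
      = ENNReal.ofReal (4 * R * arccos (dist c₁ c₂ / (2 * R))) := by
  have := Measure.nullSingletonClass_hausdorff ℂ one_pos
  rw [isClosed_closedBall.frontier_inter isClosed_closedBall, frontier_closedBall',
    frontier_closedBall']
  rcases eq_or_ne c₁ c₂ with rfl | hne
  · rw [inter_eq_left.2 sphere_subset_closedBall, inter_eq_right.2 sphere_subset_closedBall,
      union_self, hausdorffMeasure_sphere c₁ hR, dist_self, zero_div, arccos_zero]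
    congr 1; ring
  have hnull : μH[1] (sphere c₁ R ∩ closedBall c₂ R ∩ (sphere c₂ R ∩ closedBall c₁ R)) = 0 :=
    measure_mono_null (inter_subset_inter inter_subset_left inter_subset_left)
      ((finite_sphere_inter_sphere Complex.finrank_real_complex hne R R).measure_zero _)
  have harc_nonneg : 0 ≤ 2 * R * arccos (dist c₁ c₂ / (2 * R)) :=
    mul_nonneg (by positivity) (arccos_nonneg _)
  rw [inter_comm (closedBall c₁ R), measure_union₀
      (isClosed_sphere.inter isClosed_closedBall).measurableSet.nullMeasurableSet hnull,
    hausdorffMeasure_sphere_inter_closedBall hR hne hd,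
    hausdorffMeasure_sphere_inter_closedBall hR hne.symm (dist_comm c₁ c₂ ▸ hd), dist_comm c₂ c₁,
    ← ENNReal.ofReal_add harc_nonneg harc_nonneg]
  congr 1; ring

/-- **Perimeter of a Euclidean lune.**
The boundary length (one-dimensional Hausdorff measure of the frontier) of the intersection
of two closed disks of radius `R` in the Euclidean plane whose centers are at distance
`d < 2R` equals `4·R·arccos (d/(2R))`. -/
theorem perimeter_of_euclidean_lune
    (R : ℝ) (hR : 0 < R)
    (c₁ c₂ : EuclideanSpace ℝ (Fin 2)) (d : ℝ) (hd : d = dist c₁ c₂) (hd2 : d < 2 * R)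
    (D : Set (EuclideanSpace ℝ (Fin 2)))
    (hD : D = Metric.closedBall c₁ R ∩ Metric.closedBall c₂ R) :
    μH[1] (frontier D) = ENNReal.ofReal (4 * R * Real.arccos (d / (2 * R))) := by
  subst hd hD
  let e : EuclideanSpace ℝ (Fin 2) ≃ᵢ ℂ :=
    Complex.orthonormalBasisOneI.repr.toIsometryEquiv.symm
  have h := hausdorffMeasure_frontier_closedBall_inter_closedBall (c₁ := e c₁) (c₂ := e c₂) hR
    (by rw [e.dist_eq]; exact hd2.le)
  have he : ∀ s, e '' frontier s = frontier (e '' s) := e.toHomeomorph.image_frontier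
  rwa [e.dist_eq, ← e.image_closedBall, ← e.image_closedBall, ← image_inter e.injective,
    ← he, e.hausdorffMeasure_image] at h
end

section
/- For every k > 0 and λ > 0, the function L ↦ (1/k)·(arctan(k/λ) − arctan((k/λ)·cos(L·√(λ² + k²)/4))) is strictly monotone increasing on the interval [0, 2π/√(λ² + k²)]. -/
/-- **Monotonicity of the spherical lune inradius function.**
For `k > 0` and `λ > 0`, the function
`L ↦ (1/k)·(arctan (k/λ) − arctan ((k/λ)·cos (L·√(λ² + k²)/4)))`
is strictly increasing on `[0, 2π/√(λ² + k²)]`. -/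
theorem strictMonoOn_lune_inradius_spherical
    (k lam : ℝ) (hk : 0 < k) (hlam : 0 < lam) :
    StrictMonoOn (fun L : ℝ => (1 / k) *
        (Real.arctan (k / lam) -
          Real.arctan ((k / lam) * Real.cos (L * Real.sqrt (lam ^ 2 + k ^ 2) / 4))))
      (Set.Icc 0 (2 * Real.pi / Real.sqrt (lam ^ 2 + k ^ 2))) := by
  intro x hx y hy hxy
  set s := Real.sqrt (lam ^ 2 + k ^ 2) with hs
  have hspos : 0 < s := Real.sqrt_pos.mpr (by positivity)
  obtain ⟨hx0, hx1⟩ := hx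
  obtain ⟨hy0, hy1⟩ := hy
  have hxs : x * s ≤ 2 * Real.pi := by
    linarith [(le_div_iff₀ hspos).mp hx1]
  have hys : y * s ≤ 2 * Real.pi := by
    linarith [(le_div_iff₀ hspos).mp hy1]
  have hxI : x * s / 4 ∈ Set.Icc 0 Real.pi := by
    constructor
    · positivity
    · nlinarith [Real.pi_pos]
  have hyI : y * s / 4 ∈ Set.Icc 0 Real.pi := by
    constructor
    · positivity
    · nlinarith [Real.pi_pos]
  have hcos : Real.cos (y * s / 4) < Real.cos (x * s / 4) := by
    apply Real.strictAntiOn_cos hxI hyI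
    have : x * s < y * s := by nlinarith
    linarith
  have hkl : 0 < k / lam := by positivity
  have harc : Real.arctan (k / lam * Real.cos (y * s / 4)) <
      Real.arctan (k / lam * Real.cos (x * s / 4)) := by
    apply Real.arctan_strictMono
    nlinarith
  have : 0 < 1 / k := by positivity
  simp only
  nlinarith
end

section
/- For every k > 0 and λ > k, the function L ↦ (1/k)·(artanh(k/λ) − artanh((k/λ)·cos(L·√(λ² − k²)/4))) is strictly monotone increasing on the interval [0, 2π/√(λ² − k²)]. -/
/-- The inverse hyperbolic tangent, `artanh x = (1/2)·log ((1 + x)/(1 − x))`. -/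
noncomputable def Real.artanh' (x : ℝ) : ℝ := Real.log ((1 + x) / (1 - x)) / 2

/-! The angle `L·√(λ² − k²)/4` runs through `[0, π/2]`, where `cos` strictly decreases, so the
argument `(k/λ)·cos(…)` of the second `artanh` strictly decreases inside `(-1, 1)`, where `artanh`
strictly increases. -/

open Real Set

namespace Real

theorem artanh'_eq_artanh {x : ℝ} (hx : x ∈ Icc (-1) 1) : artanh' x = artanh x := by
  rw [artanh', artanh_eq_half_log hx]
  ring

theorem strictMonoOn_artanh' : StrictMonoOn artanh' (Ioo (-1) 1) :=
  strictMonoOn_artanh.congr fun _ hx => (artanh'_eq_artanh (Ioo_subset_Icc_self hx)).symm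

theorem strictAntiOn_cos_mul_div_four {s : ℝ} (hs : 0 < s) :
    StrictAntiOn (fun L => cos (L * s / 4)) (Icc 0 (4 * π / s)) :=
  strictAntiOn_cos.comp_strictMonoOn (fun _ _ _ _ hab => by gcongr) fun L ⟨hL₀, hL₁⟩ =>
    ⟨by positivity, by rw [le_div_iff₀ hs] at hL₁; linarith⟩

theorem mul_cos_mem_Ioo {c : ℝ} (hc : |c| < 1) (x : ℝ) : c * cos x ∈ Ioo (-1) 1 := by
  rw [mem_Ioo, ← abs_lt, abs_mul]
  exact (mul_le_of_le_one_right (abs_nonneg c) (abs_cos_le_one x)).trans_lt hc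

end Real

/-- **Monotonicity of the hyperbolic lune inradius function (case `λ > k`).**
For `0 < k < λ`, the function
`L ↦ (1/k)·(artanh (k/λ) − artanh ((k/λ)·cos (L·√(λ² − k²)/4)))`
is strictly increasing on `[0, 2π/√(λ² − k²)]`. -/
theorem strictMonoOn_lune_inradius_hyperbolic_of_lt
    (k lam : ℝ) (hk : 0 < k) (hlam : k < lam) :
    StrictMonoOn (fun L : ℝ => (1 / k) *
        (Real.artanh' (k / lam) -
          Real.artanh' ((k / lam) * Real.cos (L * Real.sqrt (lam ^ 2 - k ^ 2) / 4))))
      (Set.Icc 0 (2 * Real.pi / Real.sqrt (lam ^ 2 - k ^ 2))) := by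
  set s := √(lam ^ 2 - k ^ 2)
  have hlam₀ : 0 < lam := hk.trans hlam
  have hs : 0 < s := sqrt_pos.mpr (by nlinarith)
  have hratio : |k / lam| < 1 := by
    rwa [abs_of_pos (div_pos hk hlam₀), div_lt_one hlam₀]
  have hcos : StrictAntiOn (fun L => k / lam * cos (L * s / 4)) (Icc 0 (2 * π / s)) :=
    (strictMono_mul_left_of_pos (div_pos hk hlam₀)).comp_strictAntiOn
      ((strictAntiOn_cos_mul_div_four hs).mono (Icc_subset_Icc_right (by gcongr; norm_num)))
  have hartanh : StrictAntiOn (fun L => artanh' (k / lam * cos (L * s / 4))) (Icc 0 (2 * π / s)) :=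
    strictMonoOn_artanh'.comp_strictAntiOn hcos fun L _ => mul_cos_mem_Ioo hratio _
  exact fun a ha b hb hab =>
    mul_lt_mul_of_pos_left (sub_lt_sub_left (hartanh ha hb hab) _) (one_div_pos.mpr hk)
end

section
/- For every k > 0 and 0 < λ < k, the function L ↦ (1/(2k))·log( (k + λ)·(cosh(L·√(k² − λ²)/4)² − λ²/k²) / ((k − λ)·(cosh(L·√(k² − λ²)/4) + 1)²) ) is strictly monotone increasing on the interval [0, ∞). -/
/-- **Monotonicity of the hyperbolic lune inradius function (case `λ < k`).**
For `0 < λ < k`, the function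
`L ↦ (1/(2k))·log ((k + λ)·(cosh (L·√(k² − λ²)/4)² − λ²/k²) /
  ((k − λ)·(cosh (L·√(k² − λ²)/4) + 1)²))`
is strictly increasing on `[0, ∞)`. -/
theorem strictMonoOn_lune_inradius_hyperbolic_of_gt
    (k lam : ℝ) (hlam : 0 < lam) (hk : lam < k) :
    StrictMonoOn (fun L : ℝ => (1 / (2 * k)) *
        Real.log ((k + lam) * (Real.cosh (L * Real.sqrt (k ^ 2 - lam ^ 2) / 4) ^ 2
            - lam ^ 2 / k ^ 2) /
          ((k - lam) * (Real.cosh (L * Real.sqrt (k ^ 2 - lam ^ 2) / 4) + 1) ^ 2)))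
      (Set.Ici 0) := by
  have hk0 : 0 < k := hlam.trans hk
  have hs : 0 < Real.sqrt (k ^ 2 - lam ^ 2) := Real.sqrt_pos.2 (by nlinarith)
  have hm0 : 0 < lam ^ 2 / k ^ 2 := by positivity
  have hm : lam ^ 2 / k ^ 2 < 1 := by
    rw [div_lt_one (by positivity)]; nlinarith
  intro a ha b hb hab
  simp only
  set xa := Real.cosh (a * Real.sqrt (k ^ 2 - lam ^ 2) / 4) with hxa
  set xb := Real.cosh (b * Real.sqrt (k ^ 2 - lam ^ 2) / 4) with hxb
  have h1a : 1 ≤ xa := Real.one_le_cosh _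
  have h1b : 1 ≤ xb := Real.one_le_cosh _
  have ha0 : (0:ℝ) ≤ a := ha
  have hlt : xa < xb := by
    rw [hxa, hxb, Real.cosh_lt_cosh, abs_of_nonneg (by nlinarith),
      abs_of_nonneg (by nlinarith)]
    nlinarith
  have hpa : 0 < xa ^ 2 - lam ^ 2 / k ^ 2 := by nlinarith
  have hpb : 0 < xb ^ 2 - lam ^ 2 / k ^ 2 := by nlinarith
  have hkl : 0 < k + lam := by linarith
  have hkm : 0 < k - lam := by linarith
  have hcore : (k + lam) * (xa ^ 2 - lam ^ 2 / k ^ 2) / ((k - lam) * (xa + 1) ^ 2)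
      < (k + lam) * (xb ^ 2 - lam ^ 2 / k ^ 2) / ((k - lam) * (xb + 1) ^ 2) := by
    rw [div_lt_div_iff₀ (by positivity) (by positivity)]
    nlinarith [mul_pos (sub_pos.2 hlt) (show (0:ℝ) < 2 * xa * xb + xa + xb by nlinarith),
      mul_pos (sub_pos.2 hlt)
        (mul_pos hm0 (show (0:ℝ) < xa + xb + 2 by nlinarith)),
      mul_pos hkl hkm]
  have hposa : 0 < (k + lam) * (xa ^ 2 - lam ^ 2 / k ^ 2) / ((k - lam) * (xa + 1) ^ 2) :=
    div_pos (mul_pos hkl hpa) (by positivity)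
  exact mul_lt_mul_of_pos_left (Real.log_lt_log hposa hcore) (by positivity)
end

section
/- Fix k > 0 and L > 0. Then the function λ ↦ (1/(2k))·log( (k + λ)·(cosh(L·√(k² − λ²)/4)² − λ²/k²) / ((k − λ)·(cosh(L·√(k² − λ²)/4) + 1)²) ) tends to (1/(2k))·log(1 + L²·k²/16) as λ tends to k from the left within (0, k) (i.e. the limit along the filter 𝓝[Set.Ioo 0 k] k is 𝓝 ((1/(2k))·log(1 + L²·k²/16))). -/
/-!
Put `s = √(k² - λ²)` and `c = cosh (L s / 4)`. Factoring `c² - λ²/k² = (c + λ/k)(c - λ/k)`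
and writing `c - λ/k = (c - 1) + (k - λ)/k`, the argument of the logarithm becomes
`(k + λ)(c + λ/k)/(c + 1)² · ((c - 1)/s² · (k + λ) + 1/k)`, since `s² = (k + λ)(k - λ)`.
As `λ → k⁻` we have `s → 0`, `c → 1` and `(c - 1)/s² → L²/32`, so this tends to
`k · (L² k/16 + 1/k) = 1 + L² k²/16`, and the logarithm is continuous there.
-/

open Topology Filter Real

theorem tendsto_sinh_mul_div_self (a : ℝ) :
    Tendsto (fun s : ℝ => sinh (a * s) / s) (𝓝[≠] 0) (𝓝 a) := by
  have h := hasDerivAt_iff_tendsto_slope.mp (((hasDerivAt_id 0).const_mul a).sinh)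
  simp only [mul_zero, cosh_zero, id, one_mul, mul_one] at h
  exact h.congr fun s => by simp [slope_def_field]

theorem cosh_sub_one_eq_two_mul_sinh_half_sq (x : ℝ) : cosh x - 1 = 2 * sinh (x / 2) ^ 2 := by
  have h := cosh_two_mul (x / 2)
  rw [mul_div_cancel₀ x two_ne_zero, cosh_sq] at h
  linarith

theorem tendsto_cosh_mul_sub_one_div_sq (a : ℝ) :
    Tendsto (fun s : ℝ => (cosh (a * s) - 1) / s ^ 2) (𝓝[≠] 0) (𝓝 (a ^ 2 / 2)) := by
  have h := ((tendsto_sinh_mul_div_self (a / 2)).pow 2).const_mul 2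
  convert h using 2 with s
  · rw [cosh_sub_one_eq_two_mul_sinh_half_sq, div_pow, mul_div_assoc, mul_div_right_comm]
  · ring

theorem tendsto_sqrt_sq_sub_sq_nhdsNE (k : ℝ) :
    Tendsto (fun x : ℝ => √(k ^ 2 - x ^ 2)) (𝓝[Set.Ioo 0 k] k) (𝓝[≠] 0) := by
  refine tendsto_nhdsWithin_iff.mpr ⟨?_, ?_⟩
  · have h : Continuous (fun x : ℝ => √(k ^ 2 - x ^ 2)) := by fun_prop
    simpa using h.continuousWithinAt.tendsto (x := k) (s := Set.Ioo 0 k)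
  · filter_upwards [self_mem_nhdsWithin] with x ⟨hx0, hxk⟩
    exact (sqrt_pos.mpr (by nlinarith)).ne'

theorem hyperbolic_bound_arg_eq {k lam s : ℝ} (c : ℝ) (hk : k ≠ 0) (hs : s ^ 2 = k ^ 2 - lam ^ 2)
    (hs0 : s ≠ 0) :
    (k + lam) * (c ^ 2 - lam ^ 2 / k ^ 2) / ((k - lam) * (c + 1) ^ 2) =
      (k + lam) * (c + lam / k) / (c + 1) ^ 2 * ((c - 1) / s ^ 2 * (k + lam) + 1 / k) := by
  have hfac : (k + lam) * (k - lam) ≠ 0 := by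
    rwa [← sq_sub_sq, ← hs, pow_ne_zero_iff two_ne_zero]
  rw [hs, sq_sub_sq]
  field_simp [left_ne_zero_of_mul hfac, right_ne_zero_of_mul hfac]
  ring

theorem tendsto_hyperbolic_bound_lambda_to_k_from_left_general
    (k L : ℝ) (hk : 0 < k) :
    Filter.Tendsto
      (fun lam : ℝ => (1 / (2 * k)) *
        Real.log ((k + lam) * (Real.cosh (L * Real.sqrt (k ^ 2 - lam ^ 2) / 4) ^ 2
            - lam ^ 2 / k ^ 2) /
          ((k - lam) * (Real.cosh (L * Real.sqrt (k ^ 2 - lam ^ 2) / 4) + 1) ^ 2)))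
      (𝓝[Set.Ioo 0 k] k)
      (𝓝 ((1 / (2 * k)) * Real.log (1 + L ^ 2 * k ^ 2 / 16))) := by
  have hlam : Tendsto (fun lam : ℝ => lam) (𝓝[Set.Ioo 0 k] k) (𝓝 k) :=
    tendsto_id.mono_left nhdsWithin_le_nhds
  have hs := tendsto_sqrt_sq_sub_sq_nhdsNE k
  have hcosh : Tendsto (fun lam => cosh (L * √(k ^ 2 - lam ^ 2) / 4)) (𝓝[Set.Ioo 0 k] k)
      (𝓝 1) := by
    have h0 : Tendsto (fun s => cosh (L * s / 4)) (𝓝 0) (𝓝 1) := by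
      simpa using (by fun_prop : Continuous fun s => cosh (L * s / 4)).tendsto 0
    exact h0.comp (hs.mono_right nhdsWithin_le_nhds)
  have hquot : Tendsto
      (fun lam => (cosh (L * √(k ^ 2 - lam ^ 2) / 4) - 1) / √(k ^ 2 - lam ^ 2) ^ 2)
      (𝓝[Set.Ioo 0 k] k) (𝓝 ((L / 4) ^ 2 / 2)) :=
    ((tendsto_cosh_mul_sub_one_div_sq (L / 4)).comp hs).congr fun lam => by
      simp [mul_div_right_comm]
  have hprod := (((hlam.const_add k).mul (hcosh.add (hlam.div_const k))).div
    ((hcosh.add_const 1).pow 2) (by norm_num)).mul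
    ((hquot.mul (hlam.const_add k)).add_const (1 / k))
  rw [show (k + k) * (1 + k / k) / (1 + 1) ^ 2 * ((L / 4) ^ 2 / 2 * (k + k) + 1 / k) =
    1 + L ^ 2 * k ^ 2 / 16 by field_simp; ring] at hprod
  refine ((hprod.congr' ?_).log (by positivity)).const_mul _
  filter_upwards [self_mem_nhdsWithin] with lam ⟨hlam0, hlamk⟩
  exact (hyperbolic_bound_arg_eq _ hk.ne' (sq_sqrt (by nlinarith))
    (sqrt_pos.mpr (by nlinarith)).ne').symm

/-- **Phase transition `λ → k⁻` in the hyperbolic inradius bound.**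
For fixed `k > 0` and `L > 0`, the right-hand side of the bound for `0 < λ < k` tends to the
right-hand side of the bound for `λ = k` as `λ → k` from the left within `(0, k)`. -/
theorem tendsto_hyperbolic_bound_lambda_to_k_from_left
    (k L : ℝ) (hk : 0 < k) (hL : 0 < L) :
    Filter.Tendsto
      (fun lam : ℝ => (1 / (2 * k)) *
        Real.log ((k + lam) * (Real.cosh (L * Real.sqrt (k ^ 2 - lam ^ 2) / 4) ^ 2
            - lam ^ 2 / k ^ 2) /
          ((k - lam) * (Real.cosh (L * Real.sqrt (k ^ 2 - lam ^ 2) / 4) + 1) ^ 2)))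
      (𝓝[Set.Ioo 0 k] k)
      (𝓝 ((1 / (2 * k)) * Real.log (1 + L ^ 2 * k ^ 2 / 16))) :=
  tendsto_hyperbolic_bound_lambda_to_k_from_left_general k L hk
end

section
/- Fix λ > 0 and L > 0. Then the function k ↦ (1/k)·(artanh(k/λ) − artanh((k/λ)·cos(L·√(λ² − k²)/4))) tends to (1/λ)·(1 − cos(λ·L/4)) as k tends to 0 from the right within (0, λ) (i.e. the limit along the filter 𝓝[Set.Ioo 0 λ] 0 is 𝓝 ((1/λ)·(1 − cos(λ·L/4)))). -/
open Topology

/-!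
`artanh'` vanishes at `0` with derivative `1` there, so `artanh' (k * α k) / k → lim α` whenever `α`
converges. Both terms of the bound have this shape, with `α k = 1/λ` and
`α k = cos (L √(λ² − k²) / 4) / λ`, and the second `α` tends to `cos (λ L / 4) / λ`.
-/

open Filter

theorem Real.artanh'_zero : Real.artanh' 0 = 0 := by simp [Real.artanh']

theorem Real.hasDerivAt_artanh'_zero : HasDerivAt Real.artanh' 1 0 := by
  have h := ((((hasDerivAt_id (0 : ℝ)).const_add 1).div ((hasDerivAt_id (0 : ℝ)).const_sub 1)
    (by norm_num)).log (by norm_num)).div_const 2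
  exact h.congr_deriv (by norm_num)

theorem tendsto_comp_mul_div_self {𝕜 : Type*} [NontriviallyNormedField 𝕜] {f : 𝕜 → 𝕜}
    {f' a : 𝕜} (hf : HasDerivAt f f' 0) (hf0 : f 0 = 0) {α : 𝕜 → 𝕜}
    (hα : Tendsto α (𝓝[≠] 0) (𝓝 a)) :
    Tendsto (fun k => f (k * α k) / k) (𝓝[≠] 0) (𝓝 (a * f')) := by
  have hslope : Tendsto (dslope f 0) (𝓝 0) (𝓝 f') := by
    simpa [dslope_same, hf.deriv] using
      (continuousAt_dslope_same.2 hf.differentiableAt).tendsto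
  have harg : Tendsto (fun k => k * α k) (𝓝[≠] 0) (𝓝 0) := by
    simpa using (tendsto_nhdsWithin_of_tendsto_nhds tendsto_id).mul hα
  refine (hα.mul (hslope.comp harg)).congr' ?_
  filter_upwards [self_mem_nhdsWithin] with k (hk : k ≠ 0)
  have h := sub_smul_dslope f 0 (k * α k)
  rw [hf0, sub_zero, sub_zero, smul_eq_mul] at h
  rw [Function.comp_apply, ← h]
  field_simp

theorem tendsto_hyperbolic_bound_k_to_zero_general
    (lam L : ℝ) (hlam : 0 < lam) :
    Filter.Tendsto
      (fun k : ℝ => (1 / k) *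
        (Real.artanh' (k / lam) -
          Real.artanh' ((k / lam) * Real.cos (L * Real.sqrt (lam ^ 2 - k ^ 2) / 4))))
      (𝓝[Set.Ioo 0 lam] 0)
      (𝓝 ((1 / lam) * (1 - Real.cos (lam * L / 4)))) := by
  have hcos : Tendsto (fun k : ℝ => Real.cos (L * Real.sqrt (lam ^ 2 - k ^ 2) / 4) / lam)
      (𝓝[≠] 0) (𝓝 (Real.cos (lam * L / 4) / lam)) := by
    refine tendsto_nhdsWithin_of_tendsto_nhds ?_
    have hcont : Continuous fun k : ℝ => Real.cos (L * Real.sqrt (lam ^ 2 - k ^ 2) / 4) / lam := by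
      fun_prop
    simpa [Real.sqrt_sq hlam.le, mul_comm L lam] using hcont.tendsto 0
  have hlim := (tendsto_comp_mul_div_self Real.hasDerivAt_artanh'_zero Real.artanh'_zero
    (tendsto_const_nhds (x := lam⁻¹))).sub
    (tendsto_comp_mul_div_self Real.hasDerivAt_artanh'_zero Real.artanh'_zero hcos)
  have hsub : Set.Ioo 0 lam ⊆ {0}ᶜ := fun k hk => hk.1.ne'
  convert hlim.mono_left (nhdsWithin_mono 0 hsub) using 2 with k
  · ring_nf
  · ring

/-- **Convergence of the hyperbolic inradius bound to the Euclidean one as `k → 0⁺`.**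
For fixed `λ > 0` and `L > 0`, the right-hand side of the hyperbolic bound in curvature `−k²`
(for `λ > k`) tends to the right-hand side of the Euclidean bound as `k → 0` from the right
within `(0, λ)`. -/
theorem tendsto_hyperbolic_bound_k_to_zero
    (lam L : ℝ) (hlam : 0 < lam) (hL : 0 < L) :
    Filter.Tendsto
      (fun k : ℝ => (1 / k) *
        (Real.artanh' (k / lam) -
          Real.artanh' ((k / lam) * Real.cos (L * Real.sqrt (lam ^ 2 - k ^ 2) / 4))))
      (𝓝[Set.Ioo 0 lam] 0)
      (𝓝 ((1 / lam) * (1 - Real.cos (lam * L / 4)))) :=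
  tendsto_hyperbolic_bound_k_to_zero_general lam L hlam
end

section
/- Let R > 0 and c₁, c₂ ∈ ℍ with d = dist c₁ c₂ satisfying d < 2R, and set D = Metric.closedBall c₁ R ∩ Metric.closedBall c₂ R (a hyperbolic lune). Then the inradius of D equals R − d/2, that is, sSup {Metric.infDist x (frontier D) | x ∈ D} = R − d/2. -/
/-!
Any two points of `ℍ` lie on a geodesic line: `SL(2, ℝ)` moves them onto the imaginary axis,
which is isometric to `ℝ`. Hence `ℍ` has midpoints and geodesics can be prolonged.

If `x ∈ D` and `r < infDist x (frontier D)`, the closed ball of radius `r` about `x` lies in `D`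
because balls are connected. Prolonging the geodesic from a centre `cᵢ` through `x` by `r` shows
`dist x cᵢ + r ≤ R`, and averaging over `i = 1, 2` gives `r ≤ R - d / 2`. Conversely every
frontier point of `D` lies on one of the two spheres, so by the triangle inequality the midpoint
of `c₁ c₂` is at distance at least `R - d / 2` from the frontier.
-/

open scoped UpperHalfPlane MatrixGroups
open Metric Set

theorem IsPreconnected.subset_interior_of_disjoint_frontier {X : Type*} [TopologicalSpace X]
    {K s : Set X} (hK : IsPreconnected K) (hKs : (K ∩ s).Nonempty)
    (hdisj : Disjoint K (frontier s)) : K ⊆ interior s := by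
  have hint : ∀ y ∈ K, y ∈ closure s → y ∈ interior s := fun y hyK hys => by
    by_contra hyi
    exact hdisj.notMem_of_mem_left hyK ⟨hys, hyi⟩
  obtain ⟨x, hxK, hxs⟩ := hKs
  refine hK.subset_of_closure_inter_subset isOpen_interior
    ⟨x, hxK, hint x hxK (subset_closure hxs)⟩ ?_
  rintro y ⟨hy, hyK⟩
  exact hint y hyK (closure_mono interior_subset hy)

theorem Metric.closedBall_subset_of_lt_infDist_frontier {X : Type*} [PseudoMetricSpace X]
    {s : Set X} {x : X} {r : ℝ} (hball : IsPreconnected (closedBall x r)) (hx : x ∈ s)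
    (hr : r < infDist x (frontier s)) : closedBall x r ⊆ s := by
  rcases lt_or_ge r 0 with hneg | hnonneg
  · simp [closedBall_eq_empty.2 hneg]
  · exact (hball.subset_interior_of_disjoint_frontier ⟨x, mem_closedBall_self hnonneg, hx⟩
      (disjoint_closedBall_of_lt_infDist hr)).trans interior_subset

theorem Metric.le_infDist_frontier_closedBall_inter {X : Type*} [PseudoMetricSpace X]
    {c₁ c₂ x : X} {R ρ : ℝ} (h₁ : dist x c₁ ≤ ρ) (h₂ : dist x c₂ ≤ ρ)
    (hne : (frontier (closedBall c₁ R ∩ closedBall c₂ R)).Nonempty) :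
    R - ρ ≤ infDist x (frontier (closedBall c₁ R ∩ closedBall c₂ R)) := by
  refine (le_infDist hne).2 fun y hy => ?_
  rcases frontier_inter_subset _ _ hy with ⟨hy, -⟩ | ⟨-, hy⟩
  · have hyc : dist y c₁ = R := frontier_closedBall_subset_sphere hy
    linarith [dist_triangle y x c₁, dist_comm x y]
  · have hyc : dist y c₂ = R := frontier_closedBall_subset_sphere hy
    linarith [dist_triangle y x c₂, dist_comm x y]

namespace UpperHalfPlane

noncomputable def rotation (θ : ℝ) : SL(2, ℝ) :=
  ⟨!![Real.cos θ, Real.sin θ; -Real.sin θ, Real.cos θ], by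
    simp [Matrix.det_fin_two_of, ← sq, Real.cos_sq_add_sin_sq]⟩

theorem coe_rotation_smul (θ : ℝ) (z : ℍ) :
    (↑(rotation θ • z) : ℂ) =
      (Real.cos θ * z + Real.sin θ) / (-Real.sin θ * z + Real.cos θ) := by
  rw [specialLinearGroup_apply]
  simp [rotation]

theorem continuous_rotation : Continuous rotation := by
  refine Continuous.subtype_mk ?_ _
  refine continuous_matrix fun i j => ?_
  fin_cases i <;> fin_cases j <;> simp <;> fun_prop

theorem rotation_smul_I (θ : ℝ) : rotation θ • I = I := by
  have h : (-Real.sin θ * I + Real.cos θ : ℂ) ≠ 0 := fun h0 => by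
    have h1 := congrArg Complex.re h0
    have h2 := congrArg Complex.im h0
    simp [-Complex.ofReal_cos, -Complex.ofReal_sin] at h1 h2
    nlinarith [Real.sin_sq_add_cos_sq θ]
  ext1
  rw [coe_rotation_smul, div_eq_iff h, coe_I]
  linear_combination (Real.sin θ : ℂ) * Complex.I_mul_I

theorem re_rotation_zero_smul (z : ℍ) : (rotation 0 • z).re = z.re := by
  simp [← coe_re, coe_rotation_smul]

theorem re_rotation_pi_div_two_smul (z : ℍ) :
    (rotation (Real.pi / 2) • z).re = -(z.re / Complex.normSq z) := by
  simp [← coe_re, coe_rotation_smul]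

/-- After moving `z` to `I`, the rotation about `I` by `π/2` reverses the sign of the real part
of `w`, so an intermediate rotation puts `w` on the imaginary axis. -/
theorem exists_SL2_smul_eq_I_and_re_eq_zero (z w : ℍ) :
    ∃ g : SL(2, ℝ), g • z = I ∧ (g • w).re = 0 := by
  set w' := (z.toSL2R)⁻¹ • w
  have hIVT : (0 : ℝ) ∈ uIcc (rotation 0 • w').re (rotation (Real.pi / 2) • w').re := by
    rw [re_rotation_zero_smul, re_rotation_pi_div_two_smul, mem_uIcc, neg_nonpos, neg_nonneg]
    have := normSq_pos w'
    rcases le_total 0 w'.re with h | h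
    · exact Or.inr ⟨by positivity, h⟩
    · exact Or.inl ⟨h, div_nonpos_of_nonpos_of_nonneg h this.le⟩
  obtain ⟨θ, -, hθ⟩ := intermediate_value_uIcc
    (continuous_re.comp (continuous_rotation.smul continuous_const)).continuousOn hIVT
  refine ⟨rotation θ * (z.toSL2R)⁻¹, ?_, by simpa [mul_smul] using hθ⟩
  rw [mul_smul, inv_smul_eq_iff.2 (toSL2R_smul_I z).symm, rotation_smul_I]

theorem exists_isometry_real (z w : ℍ) :
    ∃ γ : ℝ → ℍ, Isometry γ ∧ γ 0 = z ∧ γ (dist z w) = w := by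
  obtain ⟨g, hz, hw⟩ := exists_SL2_smul_eq_I_and_re_eq_zero z w
  set V : ℝ → ℍ := fun y => mk ⟨0, Real.exp y⟩ (Real.exp_pos y)
  set e := Real.log (g • w).im
  have hV0 : V 0 = g • z := by
    rw [hz]
    ext1
    simp [V, Complex.ext_iff]
  have hVe : V e = g • w := by
    ext1
    simp [V, Complex.ext_iff, e, ← hw, Real.exp_log (g • w).im_pos]
  have hdist : dist z w = |e| := by
    rw [← dist_smul g, ← hV0, ← hVe, (isometry_vertical_line 0).dist_eq, Real.dist_eq, zero_sub,
      abs_neg]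
  obtain ⟨φ, hφ, hφ0, hφe⟩ : ∃ φ : ℝ → ℝ, Isometry φ ∧ φ 0 = 0 ∧ φ |e| = e := by
    rcases le_total 0 e with h | h
    · exact ⟨id, isometry_id, rfl, abs_of_nonneg h⟩
    · exact ⟨Neg.neg, .of_dist_eq dist_neg_neg, neg_zero, by simp [abs_of_nonpos h]⟩
  refine ⟨fun t => g⁻¹ • V (φ t),
    (isometry_smul ℍ g⁻¹).comp ((isometry_vertical_line 0).comp hφ), ?_, ?_⟩
  · simp only [hφ0, hV0, inv_smul_smul]
  · simp only [hdist, hφe, hVe, inv_smul_smul]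

theorem exists_dist_eq_half (z w : ℍ) :
    ∃ m : ℍ, dist m z = dist z w / 2 ∧ dist m w = dist z w / 2 := by
  obtain ⟨γ, hγ, hγ0, hγd⟩ := exists_isometry_real z w
  set d := dist z w
  have hd : 0 ≤ d := dist_nonneg
  refine ⟨γ (d / 2), ?_, ?_⟩
  · rw [← hγ0, hγ.dist_eq, Real.dist_eq, sub_zero, abs_of_nonneg (by positivity)]
  · rw [← hγd, hγ.dist_eq, Real.dist_eq, abs_sub_comm, abs_of_nonneg (by linarith)]
    ring

theorem dist_add_le_of_closedBall_subset_closedBall {x c : ℍ} {r R : ℝ} (hr : 0 ≤ r)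
    (h : closedBall x r ⊆ closedBall c R) : dist x c + r ≤ R := by
  obtain ⟨γ, hγ, hγ0, hγd⟩ := exists_isometry_real c x
  set d := dist c x
  have hd : 0 ≤ d := dist_nonneg
  have hy : γ (d + r) ∈ closedBall x r := by
    rw [mem_closedBall, ← hγd, hγ.dist_eq, Real.dist_eq]
    simp [abs_of_nonneg hr]
  have hcy := h hy
  rw [mem_closedBall, ← hγ0, hγ.dist_eq, Real.dist_eq, sub_zero,
    abs_of_nonneg (by positivity)] at hcy
  rwa [dist_comm]

theorem isPreconnected_closedBall (x : ℍ) (r : ℝ) : IsPreconnected (closedBall x r) := by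
  rw [← isEmbedding_coe.isInducing.isPreconnected_image, image_coe_closedBall]
  exact (convex_closedBall _ _).isPreconnected

theorem infDist_frontier_le_of_subset_closedBall {s : Set ℍ} {x c : ℍ} {R : ℝ} (hx : x ∈ s)
    (hs : s ⊆ closedBall c R) : infDist x (frontier s) ≤ R - dist x c := by
  by_contra! h
  obtain ⟨r, hr, hr'⟩ := exists_between h
  have hxc : dist x c ≤ R := hs hx
  have := dist_add_le_of_closedBall_subset_closedBall (by linarith)
    ((closedBall_subset_of_lt_infDist_frontier (isPreconnected_closedBall x r) hx hr').trans hs)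
  linarith

theorem infDist_frontier_closedBall_inter_le {c₁ c₂ x : ℍ} {R : ℝ}
    (hx : x ∈ closedBall c₁ R ∩ closedBall c₂ R) :
    infDist x (frontier (closedBall c₁ R ∩ closedBall c₂ R)) ≤ R - dist c₁ c₂ / 2 := by
  have h₁ := infDist_frontier_le_of_subset_closedBall hx inter_subset_left
  have h₂ := infDist_frontier_le_of_subset_closedBall hx inter_subset_right
  linarith [dist_triangle_left c₁ c₂ x]

end UpperHalfPlane

theorem inradius_of_hyperbolic_lune_general
    (R : ℝ)
    (c₁ c₂ : ℍ) (d : ℝ) (hd : d = dist c₁ c₂) (hd2 : d < 2 * R)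
    (D : Set ℍ)
    (hD : D = Metric.closedBall c₁ R ∩ Metric.closedBall c₂ R) :
    sSup {y : ℝ | ∃ x ∈ D, Metric.infDist x (frontier D) = y} = R - d / 2 := by
  subst hd hD
  obtain ⟨m, hm₁, hm₂⟩ := UpperHalfPlane.exists_dist_eq_half c₁ c₂
  have hmD : m ∈ closedBall c₁ R ∩ closedBall c₂ R :=
    ⟨by rw [mem_closedBall, hm₁]; linarith, by rw [mem_closedBall, hm₂]; linarith⟩
  have hfr : (frontier (closedBall c₁ R ∩ closedBall c₂ R)).Nonempty :=
    nonempty_frontier_iff.2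
      ⟨⟨m, hmD⟩, ((isCompact_closedBall c₁ R).inter_right isClosed_closedBall).ne_univ⟩
  refine IsGreatest.csSup_eq ⟨⟨m, hmD, le_antisymm
    (UpperHalfPlane.infDist_frontier_closedBall_inter_le hmD)
    (le_infDist_frontier_closedBall_inter hm₁.le hm₂.le hfr)⟩, ?_⟩
  rintro _ ⟨x, hx, rfl⟩
  exact UpperHalfPlane.infDist_frontier_closedBall_inter_le hx

/-- **Inradius of a hyperbolic lune.**
The inradius of the intersection of two closed hyperbolic disks of radius `R` in the
hyperbolic plane `ℍ` whose centers are at distance `d < 2R` equals `R − d/2`. -/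
theorem inradius_of_hyperbolic_lune
    (R : ℝ) (hR : 0 < R)
    (c₁ c₂ : ℍ) (d : ℝ) (hd : d = dist c₁ c₂) (hd2 : d < 2 * R)
    (D : Set ℍ)
    (hD : D = Metric.closedBall c₁ R ∩ Metric.closedBall c₂ R) :
    sSup {y : ℝ | ∃ x ∈ D, Metric.infDist x (frontier D) = y} = R - d / 2 :=
  inradius_of_hyperbolic_lune_general R c₁ c₂ d hd hd2 D hD
end
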